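/- On the Lorentzian cylinder C = ℝ × AddCircle(2π), let c₁, c₂, r₁, r₂ ∈ C and define V₁ = Ĵ⁻(r₁) ∩ Ĵ⁻(r₂) ∩ Ĵ⁺(c₁), V₂ = Ĵ⁻(r₁) ∩ Ĵ⁻(r₂) ∩ Ĵ⁺(c₂), W₁ = Ĵ⁻(r₁) ∩ Ĵ⁺(c₁) ∩ Ĵ⁺(c₂), W₂ = Ĵ⁻(r₂) ∩ Ĵ⁺(c₁) ∩ Ĵ⁺(c₂), and assume V₁, V₂, W₁, W₂ are all nonempty and pairwise disjoint. Let X be a connected component of the causal complement of V₁ ∪ V₂ satisfying X ⊆ Ĵ⁻(r₁) and X ∩ Ĵ⁻(r₂) = ∅. Then frontier Ĵ⁺(X) = frontier Ĵ⁻(r₂). -/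

import Mathlib

/-!
If `S ⊆ Ĵ⁻(r)` and `q` is causally disconnected from `S`, then so is every `x ≼ q` outside
`Ĵ⁻(r)`: a point of `S` before `x` would precede `q`, and one after `x` would put `x` in `Ĵ⁻(r)`.
For `q ∉ Ĵ⁻(r)` the region `Ĵ⁻(q) \ Ĵ⁻(r)` contains a connected set (convex in an unrolled chart)
reaching from `q` down to the points `(t, r.2 + π)` antipodal to `r`, for all `t` slightly above
`r.1 - π`. So the component `X` of `q` contains these points, whose futures cover the complement
of `Ĵ⁻(r)`; as `Ĵ⁻(r)` is a past set disjoint from `X`, `Ĵ⁺(X)` is exactly that complement, and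
complementary sets have the same frontier.
-/

/-- The spatial circle `ℝ/2πℤ` of circumference `2π`, with its quotient norm. -/
abbrev Circ : Type := AddCircle (2 * Real.pi)

/-- The causal relation on the Lorentzian cylinder `C = ℝ × Circ`:
`(s, φ) ≼ (t, θ)` iff `‖θ - φ‖ ≤ t - s` (the first coordinate is time). -/
def caus (p q : ℝ × Circ) : Prop := ‖q.2 - p.2‖ ≤ q.1 - p.1

/-- The causal future `Ĵ⁺(p)` of a point of the Lorentzian cylinder. -/
def Jp (p : ℝ × Circ) : Set (ℝ × Circ) := {q | caus p q}

/-- The causal past `Ĵ⁻(p)` of a point of the Lorentzian cylinder. -/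
def Jm (p : ℝ × Circ) : Set (ℝ × Circ) := {q | caus q p}

/-- The causal future `Ĵ⁺(S)` of a set on the Lorentzian cylinder. -/
def JpS (S : Set (ℝ × Circ)) : Set (ℝ × Circ) := {q | ∃ p ∈ S, caus p q}

/-- The causal complement of a set `S` on the Lorentzian cylinder: the set of points
causally disconnected from every point of `S`. -/
def causCompl (S : Set (ℝ × Circ)) : Set (ℝ × Circ) :=
  {q | ∀ p ∈ S, ¬ caus p q ∧ ¬ caus q p}

open Real Set

namespace Circ

lemma norm_le_pi (z : Circ) : ‖z‖ ≤ π := by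
  simpa [abs_of_pos two_pi_pos] using
    AddCircle.norm_le_half_period (x := z) (p := 2 * π) two_pi_pos.ne'

lemma norm_coe_le_abs (x : ℝ) : ‖(x : Circ)‖ ≤ |x| :=
  QuotientAddGroup.norm_mk_le_norm

lemma norm_coe_of_abs_le {x : ℝ} (h : |x| ≤ π) : ‖(x : Circ)‖ = |x| := by
  rw [AddCircle.norm_coe_eq_abs_iff (p := 2 * π) two_pi_pos.ne', abs_of_pos two_pi_pos]
  linarith

lemma exists_sign_mul_norm (z : Circ) : ∃ σ : ℝ, |σ| = 1 ∧ ((σ * ‖z‖ : ℝ) : Circ) = z := by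
  obtain ⟨x, rfl⟩ := QuotientAddGroup.mk_surjective z
  set y := x - round ((2 * π)⁻¹ * x) * (2 * π)
  have hy : (y : Circ) = x := by
    rw [AddCircle.coe_sub, ← zsmul_eq_mul, AddCircle.coe_zsmul, AddCircle.coe_period, smul_zero,
      sub_zero]
  have hnorm : ‖(x : Circ)‖ = |y| := AddCircle.norm_eq _
  rcases abs_choice y with h | h
  · exact ⟨1, abs_one, by rw [hnorm, h, one_mul, hy]⟩
  · exact ⟨-1, by simp, by rw [hnorm, h, neg_one_mul, neg_neg, hy]⟩

lemma coe_mul_pi {σ : ℝ} (hσ : |σ| = 1) : ((σ * π : ℝ) : Circ) = π := by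
  rcases abs_eq zero_le_one |>.mp hσ with rfl | rfl
  · rw [one_mul]
  · rw [← AddCircle.coe_add_period, neg_one_mul]; congr 1; ring_nf

lemma norm_sub_coe_pi (z : Circ) : ‖z - (π : Circ)‖ = π - ‖z‖ := by
  obtain ⟨σ, hσ, hz⟩ := exists_sign_mul_norm z
  have h0 : 0 ≤ ‖z‖ := norm_nonneg z
  have habs : |σ * (‖z‖ - π)| = π - ‖z‖ := by
    rw [abs_mul, hσ, one_mul, abs_of_nonpos (by linarith [norm_le_pi z])]; ring
  conv_lhs => rw [← hz, ← coe_mul_pi hσ, ← AddCircle.coe_sub, ← mul_sub]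
  rw [norm_coe_of_abs_le (by rw [habs]; linarith), habs]

end Circ

lemma caus_trans {p q r : ℝ × Circ} (hpq : caus p q) (hqr : caus q r) : caus p r := by
  unfold caus at *
  calc ‖r.2 - p.2‖ ≤ ‖r.2 - q.2‖ + ‖q.2 - p.2‖ := norm_sub_le_norm_sub_add_norm_sub _ _ _
    _ ≤ r.1 - p.1 := by linarith

lemma JpS_subset_compl_Jm {X : Set (ℝ × Circ)} {r : ℝ × Circ} (hX : X ∩ Jm r = ∅) :
    JpS X ⊆ (Jm r)ᶜ := by
  rintro q ⟨p, hp, hpq⟩ hqr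
  exact hX.subset ⟨hp, caus_trans hpq hqr⟩

lemma Jm_inter_compl_Jm_subset_causCompl {S : Set (ℝ × Circ)} {q r : ℝ × Circ}
    (hS : S ⊆ Jm r) (hq : q ∈ causCompl S) : Jm q ∩ (Jm r)ᶜ ⊆ causCompl S :=
  fun _ ⟨hxq, hxr⟩ p hp =>
    ⟨fun hpx => (hq p hp).1 (caus_trans hpx hxq), fun hxp => hxr (caus_trans hxp (hS hp))⟩

lemma compl_Jm_subset_JpS {X : Set (ℝ × Circ)} {r : ℝ × Circ} {δ : ℝ} (hδ : 0 < δ)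
    (hX : ∀ t ∈ Ioc (r.1 - π) (r.1 - π + δ), (t, r.2 + (π : Circ)) ∈ X) :
    (Jm r)ᶜ ⊆ JpS X := by
  intro q hq
  have hq' : r.1 - q.1 < ‖q.2 - r.2‖ := by
    rw [norm_sub_rev]; exact not_le.mp hq
  set ε := min δ (‖q.2 - r.2‖ - (r.1 - q.1))
  have hε : 0 < ε := lt_min hδ (by linarith)
  have hεδ : ε ≤ δ := min_le_left _ _
  have hεq : ε ≤ ‖q.2 - r.2‖ - (r.1 - q.1) := min_le_right _ _
  refine ⟨_, hX (r.1 - π + ε) ⟨by linarith, by linarith⟩, ?_⟩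
  show ‖q.2 - (r.2 + (π : Circ))‖ ≤ q.1 - (r.1 - π + ε)
  rw [← sub_sub, Circ.norm_sub_coe_pi]
  linarith

noncomputable def cylChart (r : ℝ × Circ) (σ : ℝ) (a : ℝ × ℝ) : ℝ × Circ :=
  (a.1, r.2 + ((σ * a.2 : ℝ) : Circ))

section cylChart

variable {r : ℝ × Circ} {σ : ℝ}

lemma continuous_cylChart : Continuous (cylChart r σ) :=
  continuous_fst.prodMk <| continuous_const.add <|
    (AddCircle.continuous_mk' _).comp (continuous_const.mul continuous_snd)

lemma caus_cylChart (hσ : |σ| = 1) {a b : ℝ × ℝ} (h : |b.2 - a.2| ≤ b.1 - a.1) :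
    caus (cylChart r σ a) (cylChart r σ b) := by
  show ‖(r.2 + ((σ * b.2 : ℝ) : Circ)) - (r.2 + ((σ * a.2 : ℝ) : Circ))‖ ≤ b.1 - a.1
  rw [add_sub_add_left_eq_sub, ← AddCircle.coe_sub, ← mul_sub]
  calc _ ≤ |σ * (b.2 - a.2)| := Circ.norm_coe_le_abs _
    _ ≤ b.1 - a.1 := by rwa [abs_mul, hσ, one_mul]

lemma not_caus_cylChart (hσ : |σ| = 1) {a : ℝ × ℝ} (h₀ : 0 ≤ a.2) (hπ : a.2 ≤ π)
    (h : r.1 < a.1 + a.2) : ¬ caus (cylChart r σ a) r := by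
  have habs : |σ * a.2| = a.2 := by rw [abs_mul, hσ, one_mul, abs_of_nonneg h₀]
  show ¬ ‖r.2 - (r.2 + ((σ * a.2 : ℝ) : Circ))‖ ≤ r.1 - a.1
  rw [sub_add_cancel_left, norm_neg, Circ.norm_coe_of_abs_le (by rwa [habs]), habs]
  linarith

end cylChart

lemma exists_antipodal_mem_connectedComponentIn {Ω : Set (ℝ × Circ)} {q r : ℝ × Circ}
    (hΩ : Jm q ∩ (Jm r)ᶜ ⊆ Ω) (hqr : ¬ caus q r) :
    ∃ δ > 0, ∀ t ∈ Ioc (r.1 - π) (r.1 - π + δ),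
      (t, r.2 + (π : Circ)) ∈ connectedComponentIn Ω q := by
  set e := ‖q.2 - r.2‖
  have he : r.1 < q.1 + e := by
    have := not_le.mp hqr; rw [norm_sub_rev] at this; linarith
  obtain ⟨σ, hσ, hσe⟩ := Circ.exists_sign_mul_norm (q.2 - r.2)
  -- A lift of part of `Ĵ⁻(q) \ Ĵ⁻(r)`, cut out by linear inequalities in null coordinates `a.1 ± a.2`.
  set K : Set (ℝ × ℝ) :=
    {a | a.2 ∈ Icc 0 π ∧ a.1 + a.2 ∈ Ioc r.1 (q.1 + e) ∧ a.1 - a.2 ≤ q.1 - e}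
  have hKconv : Convex ℝ K :=
    ((convex_Icc 0 π).linear_preimage (LinearMap.snd ℝ ℝ ℝ)).inter <|
      ((convex_Ioc _ _).linear_preimage (LinearMap.fst ℝ ℝ ℝ + LinearMap.snd ℝ ℝ ℝ)).inter <|
      (convex_Iic _).linear_preimage (LinearMap.fst ℝ ℝ ℝ - LinearMap.snd ℝ ℝ ℝ)
  have hqK : cylChart r σ (q.1, e) = q := by
    ext
    · rfl
    · show r.2 + ((σ * e : ℝ) : Circ) = q.2
      rw [hσe, add_sub_cancel]
  have hKsub : cylChart r σ '' K ⊆ Jm q ∩ (Jm r)ᶜ := by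
    rintro _ ⟨a, ⟨⟨h₀, hπ⟩, ⟨hr, hu⟩, hv⟩, rfl⟩
    refine ⟨?_, not_caus_cylChart hσ h₀ hπ hr⟩
    rw [← hqK]
    exact caus_cylChart hσ (abs_sub_le_iff.mpr ⟨by dsimp only; linarith, by dsimp only; linarith⟩)
  have hcomp := (hKconv.isPreconnected.image _ continuous_cylChart.continuousOn
    ).subset_connectedComponentIn
      ⟨(q.1, e), ⟨⟨norm_nonneg _, Circ.norm_le_pi _⟩, ⟨he, le_rfl⟩, le_rfl⟩, hqK⟩ (hKsub.trans hΩ)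
  refine ⟨q.1 + e - r.1, by linarith, fun t ht =>
    hcomp ⟨(t, π), ⟨⟨pi_pos.le, le_rfl⟩, ⟨?_, ?_⟩, ?_⟩, ?_⟩⟩
  · dsimp only; linarith [ht.1]
  · dsimp only; linarith [ht.2]
  · dsimp only; linarith [ht.2, Circ.norm_le_pi (q.2 - r.2)]
  · show (t, r.2 + ((σ * π : ℝ) : Circ)) = _
    rw [Circ.coe_mul_pi hσ]

theorem JpS_connectedComponentIn_causCompl {S : Set (ℝ × Circ)} {q r : ℝ × Circ}
    (hS : S ⊆ Jm r) (hq : q ∈ causCompl S)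
    (hX : connectedComponentIn (causCompl S) q ∩ Jm r = ∅) :
    JpS (connectedComponentIn (causCompl S) q) = (Jm r)ᶜ := by
  have hqr : ¬ caus q r := fun h => hX.subset ⟨mem_connectedComponentIn hq, h⟩
  obtain ⟨δ, hδ, hδX⟩ :=
    exists_antipodal_mem_connectedComponentIn (Jm_inter_compl_Jm_subset_causCompl hS hq) hqr
  exact (JpS_subset_compl_Jm hX).antisymm (compl_Jm_subset_JpS hδ hδX)

theorem frontier_JpS_X_eq_frontier_Jm_r₂_general (c₁ c₂ r₁ r₂ : ℝ × Circ)
    (X : Set (ℝ × Circ))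
    (hXcomp : ∃ q ∈ causCompl ((Jm r₁ ∩ Jm r₂ ∩ Jp c₁) ∪ (Jm r₁ ∩ Jm r₂ ∩ Jp c₂)),
      X = connectedComponentIn
        (causCompl ((Jm r₁ ∩ Jm r₂ ∩ Jp c₁) ∪ (Jm r₁ ∩ Jm r₂ ∩ Jp c₂))) q)
    (hX₂ : X ∩ Jm r₂ = ∅) :
    frontier (JpS X) = frontier (Jm r₂) := by
  obtain ⟨q, hq, rfl⟩ := hXcomp
  have hS : (Jm r₁ ∩ Jm r₂ ∩ Jp c₁) ∪ (Jm r₁ ∩ Jm r₂ ∩ Jp c₂) ⊆ Jm r₂ :=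
    union_subset (fun _ h => h.1.2) (fun _ h => h.1.2)
  rw [JpS_connectedComponentIn_causCompl hS hq hX₂, frontier_compl]

/-- **First boundary light-cone identity of equation (1) of the paper:**
`∂Ĵ⁺(X₁) = ∂Ĵ⁻(r₂)`.  On the Lorentzian cylinder, with the regions
`V₁ = Ĵ⁻(r₁) ∩ Ĵ⁻(r₂) ∩ Ĵ⁺(c₁)`, `V₂ = Ĵ⁻(r₁) ∩ Ĵ⁻(r₂) ∩ Ĵ⁺(c₂)`,
`W₁ = Ĵ⁻(r₁) ∩ Ĵ⁺(c₁) ∩ Ĵ⁺(c₂)`, `W₂ = Ĵ⁻(r₂) ∩ Ĵ⁺(c₁) ∩ Ĵ⁺(c₂)` all nonempty and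
pairwise disjoint, if `X` is a connected component of the causal complement of
`V₁ ∪ V₂` with `X ⊆ Ĵ⁻(r₁)` and `X ∩ Ĵ⁻(r₂) = ∅`, then
`frontier Ĵ⁺(X) = frontier Ĵ⁻(r₂)`. -/
theorem frontier_JpS_X_eq_frontier_Jm_r₂ (c₁ c₂ r₁ r₂ : ℝ × Circ)
    (hV₁ : (Jm r₁ ∩ Jm r₂ ∩ Jp c₁).Nonempty)
    (hV₂ : (Jm r₁ ∩ Jm r₂ ∩ Jp c₂).Nonempty)
    (hW₁ : (Jm r₁ ∩ Jp c₁ ∩ Jp c₂).Nonempty)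
    (hW₂ : (Jm r₂ ∩ Jp c₁ ∩ Jp c₂).Nonempty)
    (hVV : Disjoint (Jm r₁ ∩ Jm r₂ ∩ Jp c₁) (Jm r₁ ∩ Jm r₂ ∩ Jp c₂))
    (hV₁W₁ : Disjoint (Jm r₁ ∩ Jm r₂ ∩ Jp c₁) (Jm r₁ ∩ Jp c₁ ∩ Jp c₂))
    (hV₁W₂ : Disjoint (Jm r₁ ∩ Jm r₂ ∩ Jp c₁) (Jm r₂ ∩ Jp c₁ ∩ Jp c₂))
    (hV₂W₁ : Disjoint (Jm r₁ ∩ Jm r₂ ∩ Jp c₂) (Jm r₁ ∩ Jp c₁ ∩ Jp c₂))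
    (hV₂W₂ : Disjoint (Jm r₁ ∩ Jm r₂ ∩ Jp c₂) (Jm r₂ ∩ Jp c₁ ∩ Jp c₂))
    (hWW : Disjoint (Jm r₁ ∩ Jp c₁ ∩ Jp c₂) (Jm r₂ ∩ Jp c₁ ∩ Jp c₂))
    (X : Set (ℝ × Circ))
    (hXcomp : ∃ q ∈ causCompl ((Jm r₁ ∩ Jm r₂ ∩ Jp c₁) ∪ (Jm r₁ ∩ Jm r₂ ∩ Jp c₂)),
      X = connectedComponentIn
        (causCompl ((Jm r₁ ∩ Jm r₂ ∩ Jp c₁) ∪ (Jm r₁ ∩ Jm r₂ ∩ Jp c₂))) q)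
    (hX₁ : X ⊆ Jm r₁) (hX₂ : X ∩ Jm r₂ = ∅) :
    frontier (JpS X) = frontier (Jm r₂) :=
  frontier_JpS_X_eq_frontier_Jm_r₂_general c₁ c₂ r₁ r₂ X hXcomp hX₂
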